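/- arXiv:1804.00568 — 3 statements merged into one kernel-verified Lean document; each statement's English description precedes it below -/
import Mathlib

section
/- In any C-algebra M, the relation defined by a ≤ b iff a ∨ b = b is a partial order on M. -/
/-- A C-algebra (Guzmán–Squier): algebra of McCarthy's three-valued conditional logic. -/
class CAlgebra (M : Type*) where
  or : M → M → M
  and : M → M → M
  neg : M → M
  c1 : ∀ a, neg (neg a) = a
  c2 : ∀ a b, neg (and a b) = or (neg a) (neg b)
  c3 : ∀ a b c, and (and a b) c = and a (and b c)
  c4 : ∀ a b c, and a (or b c) = or (and a b) (and a c)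
  c5 : ∀ a b c, and (or a b) c = or (and a c) (and (neg a) (and b c))
  c6 : ∀ a b, or a (and a b) = a
  c7 : ∀ a b, or (and a b) (and b a) = or (and b a) (and a b)

/-- A C-algebra with constants T, F, U. -/
class CAlgebraTFU (M : Type*) extends CAlgebra M where
  T : M
  F : M
  U : M
  T_and : ∀ a : M, and T a = a
  and_T : ∀ a : M, and a T = a
  F_or : ∀ a : M, or F a = a
  or_F : ∀ a : M, or a F = a
  neg_U : neg U = U
  U_and : ∀ a : M, and U a = U
  U_or : ∀ a : M, or U a = U
  F_and : ∀ a : M, and F a = F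
  T_or : ∀ a : M, or T a = T

/-!
Neither `∨` nor `∧` is commutative in a C-algebra, but `∨` is associative (dual of `c3`) and
idempotent (from the absorption laws), which gives reflexivity and transitivity. For
antisymmetry, `a ∨ b = b` forces `a ∧ b = a` by absorption, and then `c7` reads
`a ∨ b = b ∨ a`, i.e. `b = a`.
-/

namespace CAlgebra

variable {M : Type*} [CAlgebra M]

lemma neg_or (a b : M) : neg (or a b) = and (neg a) (neg b) := by
  rw [← c1 (and (neg a) (neg b)), c2, c1, c1]

lemma or_eq_neg_and_neg (a b : M) : or a b = neg (and (neg a) (neg b)) := by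
  rw [← neg_or, c1]

lemma or_assoc (a b c : M) : or (or a b) c = or a (or b c) := by
  rw [or_eq_neg_and_neg (or a b), neg_or, or_eq_neg_and_neg a, neg_or, c3]

lemma and_or_self (a b : M) : and a (or a b) = a := by
  rw [← c1 (and a (or a b)), c2, neg_or a b, c6, c1]

lemma or_self (a : M) : or a a = a := by
  nth_rewrite 2 [← and_or_self a a]
  exact c6 a (or a a)

lemma and_eq_left_of_or_eq {a b : M} (h : or a b = b) : and a b = a := by
  rw [← h, and_or_self]

lemma eq_of_or_eq_of_or_eq {a b : M} (hab : or a b = b) (hba : or b a = a) : a = b := by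
  have h := c7 a b
  rw [and_eq_left_of_or_eq hab, and_eq_left_of_or_eq hba, hab, hba] at h
  exact h.symm

end CAlgebra

/-- In any C-algebra, `a ≤ b ↔ a ∨ b = b` is a partial order. -/
theorem stmt0 {M : Type*} [CAlgebra M] :
    IsPartialOrder M (fun a b => CAlgebra.or a b = b) := by
  refine { refl := CAlgebra.or_self, trans := fun a b c hab hbc => ?_,
           antisymm := fun _ _ => CAlgebra.eq_of_or_eq_of_or_eq }
  rw [← hbc, ← CAlgebra.or_assoc, hab]
end

section
/- In a C-algebra M with constants T, F, U, if a ≤ b and b ∨ ¬b = T, then a ∨ ¬a = T. -/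
open CAlgebra CAlgebraTFU in
/-- If `a ≤ b` and `b ∈ M#` then `a ∈ M#`. -/
theorem stmt2 {M : Type*} [CAlgebraTFU M] (a b : M)
    (hab : or a b = b) (hb : or b (neg b) = (T : M)) :
    or a (neg a) = (T : M) := by
  -- `or` in terms of `and` and `neg`
  have hor : ∀ x y : M, or x y = neg (and (neg x) (neg y)) := by
    intro x y
    rw [c2, c1, c1]
  -- De Morgan for `or`
  have dm : ∀ x y : M, neg (or x y) = and (neg x) (neg y) := by
    intro x y
    rw [hor, c1]
  -- associativity of `or`
  have orassoc : ∀ x y z : M, or (or x y) z = or x (or y z) := by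
    intro x y z
    rw [hor (or x y) z, dm, c3, ← dm, ← hor]
  -- a ∨ T = T
  have haT : or a (T : M) = T := by
    rw [← hb, ← orassoc, hab]
  -- (a ∨ T) ∧ T = a ∨ ¬a  (instance of c5)
  have key : and (or a (T : M)) (T : M) = or a (neg a) := by
    rw [c5, and_T a, T_and (T : M), and_T (neg a)]
  rw [← key, haT, T_and]
end

section
/- In any C-algebra M with T, F, U, α ∧ F = F if and only if α ∨ ¬α = T. -/
namespace CAuxStmt4

open CAlgebra CAlgebraTFU

variable {M : Type*} [CAlgebraTFU M]

/-- De Morgan for `or`. -/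
lemma negor (a b : M) : neg (or a b) = and (neg a) (neg b) := by
  conv_lhs => rw [← c1 a, ← c1 b, ← c2, c1]

lemma negT : neg (T : M) = F := by
  have h : ∀ b : M, or (neg T) b = b := by
    intro b
    have h2 := c2 (T : M) (neg b)
    rw [T_and, c1] at h2
    exact h2.symm
  have := h (F : M)
  rw [or_F] at this
  exact this

lemma negF : neg (F : M) = T := by
  rw [← negT, c1]

lemma or_idem (a : M) : or a a = a := by
  have h := c6 a (T : M)
  rw [and_T] at h
  exact h

lemma and_or_self (a b : M) : and a (or a b) = a := by
  have h := congrArg neg (c6 (neg a) (neg b))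
  rw [negor, c2, c1, c1] at h
  exact h

lemma and_idem (a : M) : and a a = a := by
  have h := and_or_self a (F : M)
  rw [or_F] at h
  exact h

/-- `a ∨ (¬a ∧ a) = a`. -/
lemma absA (a : M) : or a (and (neg a) a) = a := by
  have h := c5 a a (T : M)
  rw [or_idem, and_T] at h
  exact h.symm

/-- `¬a ∨ (a ∧ ¬a) = ¬a`. -/
lemma absB (a : M) : or (neg a) (and a (neg a)) = neg a := by
  have h := absA (neg a)
  rw [c1] at h
  exact h

/-- `a ∨ b = a ∨ (¬a ∧ b)`. -/
lemma ruleE (a b : M) : or a b = or a (and (neg a) b) := by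
  have h := c5 a b (T : M)
  rw [and_T, and_T, and_T] at h
  exact h

/-- `a ∧ b = a ∧ (¬a ∨ b)`. -/
lemma ruleF (a b : M) : and a b = and a (or (neg a) b) := by
  have h := congrArg neg (ruleE (neg a) (neg b))
  rw [negor, negor, c1, c1, c2, c1] at h
  exact h

/-- `a ∧ F = a ∧ ¬a`. -/
lemma and_F_eq (a : M) : and a (F : M) = and a (neg a) := by
  have h := ruleF a (F : M)
  rw [or_F] at h
  exact h

lemma or_assoc' (a b c : M) : or (or a b) c = or a (or b c) := by
  have h1 : or (or a b) c = neg (and (and (neg a) (neg b)) (neg c)) := by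
    rw [c2, c2, c1, c1, c1]
  have h2 : or a (or b c) = neg (and (neg a) (and (neg b) (neg c))) := by
    rw [c2, c2, c1, c1, c1]
  rw [h1, h2, c3]

/-- `(a ∨ ¬a) ∧ ¬a = (a ∧ ¬a) ∨ ¬a`. -/
lemma L1 (a : M) : and (or a (neg a)) (neg a) = or (and a (neg a)) (neg a) := by
  have h := c5 a (neg a) (neg a)
  rw [and_idem, and_idem] at h
  exact h

/-- `(a ∨ ¬a) ∧ a = a`. -/
lemma L2 (a : M) : and (or a (neg a)) a = a := by
  have h := c5 a (neg a) a
  rw [and_idem, ← c3, and_idem, absA] at h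
  exact h

/-- `(¬a ∨ a) ∧ a = (¬a ∧ a) ∨ a`. -/
lemma L1' (a : M) : and (or (neg a) a) a = or (and (neg a) a) a := by
  have h := c5 (neg a) a a
  rw [c1, and_idem, and_idem] at h
  exact h

/-- `(¬a ∨ a) ∧ ¬a = ¬a`. -/
lemma L2' (a : M) : and (or (neg a) a) (neg a) = neg a := by
  have h := c5 (neg a) a (neg a)
  rw [and_idem, c1, ← c3, and_idem, absB] at h
  exact h

end CAuxStmt4

open CAlgebra CAlgebraTFU in
/-- `α ∧ F = F` iff `α ∨ ¬α = T`. -/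
theorem stmt4 {M : Type*} [CAlgebraTFU M] (α : M) :
    and α (F : M) = (F : M) ↔ or α (neg α) = (T : M) := by
  open CAuxStmt4 in
  constructor
  · intro h
    have ht : and α (neg α) = F := by rw [← and_F_eq, h]
    have hv' : or (neg α) α = T := by
      have h2 := congrArg neg ht
      rw [c2, c1, negF] at h2
      exact h2
    calc or α (neg α) = and (or α (neg α)) T := (and_T _).symm
      _ = and (or α (neg α)) (or (neg α) α) := by rw [hv']
      _ = or (and (or α (neg α)) (neg α)) (and (or α (neg α)) α) := c4 _ _ _
      _ = or (or (and α (neg α)) (neg α)) α := by rw [L1, L2]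
      _ = or (and α (neg α)) (or (neg α) α) := or_assoc' _ _ _
      _ = or F T := by rw [ht, hv']
      _ = T := by rw [F_or]
  · intro h
    have hs : and (neg α) α = F := by
      have h2 := congrArg neg h
      rw [negor, c1, negT] at h2
      exact h2
    have hv' : or (neg α) α = T := by
      calc or (neg α) α = and (or (neg α) α) T := (and_T _).symm
        _ = and (or (neg α) α) (or α (neg α)) := by rw [h]
        _ = or (and (or (neg α) α) α) (and (or (neg α) α) (neg α)) := c4 _ _ _
        _ = or (or (and (neg α) α) α) (neg α) := by rw [L1', L2']
        _ = or (and (neg α) α) (or α (neg α)) := or_assoc' _ _ _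
        _ = or F T := by rw [hs, h]
        _ = T := by rw [F_or]
    have ht : and α (neg α) = F := by
      have h2 := congrArg neg hv'
      rw [negor, c1, negT] at h2
      exact h2
    rw [and_F_eq]
    exact ht
end
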